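/- arXiv:1605.07666 — 3 statements merged into one kernel-verified Lean document; each statement's English description precedes it below -/
import Mathlib

section
/- For every function u in H^1(ℝ), the inequality ‖u‖_{L^6(ℝ)}^6 ≤ (3/μ_ℝ²) ‖u‖_{L^2(ℝ)}^4 ‖u'‖_{L^2(ℝ)}^2 holds, where μ_ℝ = π√3/2; i.e., the sharp Gagliardo–Nirenberg constant on ℝ for the sextic power is K_ℝ = 3/μ_ℝ² = 4/π². -/
open MeasureTheory Set Filter Real

/-!
With `M = ∫ u²` and `0 ≤ b < π / (2M)`, the function
`ψ = -b tan (b (2 ∫_{-∞}^x u² - M))` is bounded and solves the Riccati equation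
`ψ' = -2u²(b² + ψ²)`. Expanding `0 ≤ ∫ (u' - u³ψ)²` and using `∫ (u⁴ψ)' = 0` gives
`b² ∫ u⁶ ≤ ∫ u'²`; letting `b → π / (2M)` yields `π² ∫ u⁶ ≤ 4 M² ∫ u'²`.
-/

theorem hasDerivAt_integral_Iic {E : Type*} [NormedAddCommGroup E] [NormedSpace ℝ E]
    [CompleteSpace E] {f : ℝ → E} (hf : Continuous f) (hfi : Integrable f) (x : ℝ) :
    HasDerivAt (fun y => ∫ t in Iic y, f t) (f x) x := by
  have hsplit : (fun y => ∫ t in Iic y, f t) =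
      fun y => (∫ t in Iic 0, f t) + ∫ t in 0..y, f t := by
    funext y
    rw [← intervalIntegral.integral_Iic_sub_Iic hfi.integrableOn hfi.integrableOn,
      add_sub_cancel]
  rw [hsplit]
  exact (intervalIntegral.integral_hasDerivAt_right hfi.intervalIntegrable
    (hf.stronglyMeasurableAtFilter _ _) hf.continuousAt).const_add _

theorem hasDerivAt_neg_mul_tan_mul {b s : ℝ} (hs : cos (b * s) ≠ 0) :
    HasDerivAt (fun s => -b * tan (b * s)) (-(b ^ 2 + (-b * tan (b * s)) ^ 2)) s := by
  have h := ((hasDerivAt_tan hs).comp s ((hasDerivAt_id s).const_mul b)).const_mul (-b)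
  refine h.congr_deriv ?_
  rw [tan_eq_sin_div_cos]
  field_simp
  linear_combination b ^ 2 * sin_sq_add_cos_sq (b * s)

section Riccati

variable {u u' ψ : ℝ → ℝ} {b C : ℝ}

theorem sq_mul_integral_pow_six_le_of_riccati (hu : ∀ x, HasDerivAt u (u' x) x)
    (h2 : Integrable fun x => u x ^ 2) (h2' : Integrable fun x => u' x ^ 2)
    (h6 : Integrable fun x => u x ^ 6)
    (hψ : ∀ x, HasDerivAt ψ (-2 * u x ^ 2 * (b ^ 2 + ψ x ^ 2)) x)
    (hψC : ∀ x, |ψ x| ≤ C) :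
    b ^ 2 * ∫ x, u x ^ 6 ≤ ∫ x, u' x ^ 2 := by
  have hu_cont : Continuous u := continuous_iff_continuousAt.2 fun x => (hu x).continuousAt
  have hψ_cont : Continuous ψ := continuous_iff_continuousAt.2 fun x => (hψ x).continuousAt
  have hu'_meas : Measurable u' := by
    rw [show u' = deriv u from funext fun x => (hu x).deriv.symm]
    exact measurable_deriv u
  have hu_L2 : MemLp u 2 := (memLp_two_iff_integrable_sq hu_cont.aestronglyMeasurable).2 h2
  have hu'_L2 : MemLp u' 2 :=
    (memLp_two_iff_integrable_sq hu'_meas.aestronglyMeasurable).2 h2'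
  have hu3_L2 : MemLp (fun x => u x ^ 3) 2 :=
    (memLp_two_iff_integrable_sq (hu_cont.pow 3).aestronglyMeasurable).2
      (by simpa only [Pi.pow_apply, ← pow_mul] using h6)
  have h_cross : Integrable fun x => u x ^ 3 * u' x * ψ x :=
    (hu3_L2.integrable_mul hu'_L2).mul_bdd hψ_cont.aestronglyMeasurable
      (Eventually.of_forall hψC)
  have h_six : Integrable fun x => u x ^ 6 * (b ^ 2 + ψ x ^ 2) :=
    h6.mul_bdd (c := b ^ 2 + C ^ 2) (continuous_const.add (hψ_cont.pow 2)).aestronglyMeasurable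
      (Eventually.of_forall fun x => by
        rw [norm_of_nonneg (by positivity)]
        nlinarith [abs_le.1 (hψC x)])
  have h_bdry : Integrable fun x => u x ^ 4 * ψ x :=
    ((hu_L2.integrable_mul hu3_L2).mul_bdd hψ_cont.aestronglyMeasurable
      (Eventually.of_forall hψC)).congr
      (Eventually.of_forall fun x => by simp only [Pi.mul_apply]; ring)
  have h_deriv : Integrable fun x =>
      4 * (u x ^ 3 * u' x * ψ x) - 2 * (u x ^ 6 * (b ^ 2 + ψ x ^ 2)) :=
    (h_cross.const_mul 4).sub (h_six.const_mul 2)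
  have h_ibp : ∫ x, (4 * (u x ^ 3 * u' x * ψ x) - 2 * (u x ^ 6 * (b ^ 2 + ψ x ^ 2))) = 0 := by
    refine integral_eq_zero_of_hasDerivAt_of_integrable (fun x => ?_) h_deriv h_bdry
    refine (((hu x).fun_pow 4).fun_mul (hψ x)).congr_deriv ?_
    push_cast
    ring
  have h_expand : ∫ x, (u' x - u x ^ 3 * ψ x) ^ 2 =
      (∫ x, u' x ^ 2) - b ^ 2 * (∫ x, u x ^ 6) -
        (∫ x, (4 * (u x ^ 3 * u' x * ψ x) - 2 * (u x ^ 6 * (b ^ 2 + ψ x ^ 2)))) / 2 := by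
    rw [← integral_const_mul, ← integral_div, ← integral_sub h2' (h6.const_mul _),
      ← integral_sub (h2'.sub' (h6.const_mul _)) (h_deriv.div_const 2)]
    congr 1 with x
    ring
  have h_sq : 0 ≤ ∫ x, (u' x - u x ^ 3 * ψ x) ^ 2 := integral_nonneg fun x => sq_nonneg _
  rw [h_expand, h_ibp] at h_sq
  linarith

theorem exists_bounded_riccati_solution (hu : Continuous u) (h2 : Integrable fun x => u x ^ 2)
    (hb : 0 ≤ b) (hbM : b * ∫ x, u x ^ 2 < π / 2) :
    ∃ ψ : ℝ → ℝ, (∃ C, ∀ x, |ψ x| ≤ C) ∧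
      ∀ x, HasDerivAt ψ (-2 * u x ^ 2 * (b ^ 2 + ψ x ^ 2)) x := by
  set M := ∫ x, u x ^ 2
  set s : ℝ → ℝ := fun x => 2 * (∫ t in Iic x, u t ^ 2) - M
  have hs : ∀ x, HasDerivAt s (2 * u x ^ 2) x := fun x =>
    ((hasDerivAt_integral_Iic (hu.pow 2) h2 x).const_mul 2).sub_const M
  have hs_mem : ∀ x, s x ∈ Icc (-M) M := by
    intro x
    have h0 : 0 ≤ ∫ t in Iic x, u t ^ 2 :=
      setIntegral_nonneg measurableSet_Iic fun t _ => sq_nonneg _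
    have hle : ∫ t in Iic x, u t ^ 2 ≤ M :=
      setIntegral_le_integral h2 (Eventually.of_forall fun t => sq_nonneg _)
    constructor <;> linarith
  have hcos : ∀ y ∈ Icc (-M) M, cos (b * y) ≠ 0 := by
    intro y hy
    have hby : |b * y| ≤ b * M := by
      rw [abs_mul, abs_of_nonneg hb]
      exact mul_le_mul_of_nonneg_left (abs_le.2 hy) hb
    exact (cos_pos_of_mem_Ioo (abs_lt.1 (hby.trans_lt hbM))).ne'
  obtain ⟨K, hK⟩ := isCompact_Icc.exists_bound_of_continuousOn fun y hy =>
    (hasDerivAt_neg_mul_tan_mul (hcos y hy)).continuousAt.continuousWithinAt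
  refine ⟨fun x => -b * tan (b * s x), ⟨K, fun x => hK _ (hs_mem x)⟩, fun x => ?_⟩
  refine ((hasDerivAt_neg_mul_tan_mul (hcos _ (hs_mem x))).comp x (hs x)).congr_deriv ?_
  ring

theorem sq_mul_integral_pow_six_le (hu : ∀ x, HasDerivAt u (u' x) x)
    (h2 : Integrable fun x => u x ^ 2) (h2' : Integrable fun x => u' x ^ 2)
    (h6 : Integrable fun x => u x ^ 6) (hb : 0 ≤ b) (hbM : b * ∫ x, u x ^ 2 < π / 2) :
    b ^ 2 * ∫ x, u x ^ 6 ≤ ∫ x, u' x ^ 2 := by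
  have hu_cont : Continuous u := continuous_iff_continuousAt.2 fun x => (hu x).continuousAt
  obtain ⟨ψ, ⟨C, hψC⟩, hψ⟩ := exists_bounded_riccati_solution hu_cont h2 hb hbM
  exact sq_mul_integral_pow_six_le_of_riccati hu h2 h2' h6 hψ hψC

end Riccati

theorem pi_sq_mul_integral_pow_six_le {u u' : ℝ → ℝ} (hu : ∀ x, HasDerivAt u (u' x) x)
    (h2 : Integrable fun x => u x ^ 2) (h2' : Integrable fun x => u' x ^ 2)
    (h6 : Integrable fun x => u x ^ 6) :
    π ^ 2 * ∫ x, u x ^ 6 ≤ 4 * (∫ x, u x ^ 2) ^ 2 * ∫ x, u' x ^ 2 := by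
  set M := ∫ x, u x ^ 2
  set S := ∫ x, u x ^ 6
  set A := ∫ x, u' x ^ 2
  have hA : 0 ≤ A := integral_nonneg fun x => sq_nonneg _
  rcases (integral_nonneg fun x => sq_nonneg (u x) : 0 ≤ M).eq_or_lt with hM | hM
  · have hu0 : (fun x => u x ^ 2) =ᵐ[volume] 0 :=
      (integral_eq_zero_iff_of_nonneg (fun x => sq_nonneg _) h2).1 hM.symm
    have hS : S = 0 := integral_eq_zero_of_ae (hu0.mono fun x hx => by simpa using hx)
    rw [hS, mul_zero]
    positivity
  · have hM0 : M ≠ 0 := hM.ne'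
    have hlim : (π / (2 * M)) ^ 2 * S ≤ A := by
      refine le_of_tendsto (((continuous_pow 2).tendsto _).mul_const S |>.mono_left
        nhdsWithin_le_nhds) (eventually_mem_set.2 (Ioo_mem_nhdsLT (by positivity)) |>.mono
          fun b hb => sq_mul_integral_pow_six_le hu h2 h2' h6 hb.1.le ?_)
      calc b * M < π / (2 * M) * M := mul_lt_mul_of_pos_right hb.2 hM
        _ = π / 2 := by field_simp
    calc π ^ 2 * S = (π / (2 * M)) ^ 2 * S * (4 * M ^ 2) := by field_simp; ring
      _ ≤ A * (4 * M ^ 2) := by gcongr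
      _ = 4 * M ^ 2 * A := by ring

/-- Sharp Gagliardo–Nirenberg inequality on ℝ for the sextic power,
with constant `K_ℝ = 3/μ_ℝ² = 4/π²`, where `μ_ℝ = π√3/2`. -/
theorem stmt_0 (u u' : ℝ → ℝ)
    (hderiv : ∀ x, HasDerivAt u (u' x) x)
    (h2 : Integrable (fun x => (u x) ^ 2))
    (h2' : Integrable (fun x => (u' x) ^ 2))
    (h6 : Integrable (fun x => (u x) ^ 6)) :
    (∫ x, (u x) ^ 6) ≤ 3 / (Real.pi * Real.sqrt 3 / 2) ^ 2 *
      (∫ x, (u x) ^ 2) ^ 2 * ∫ x, (u' x) ^ 2 ∧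
    3 / (Real.pi * Real.sqrt 3 / 2) ^ 2 = 4 / Real.pi ^ 2 := by
  have hconst : 3 / (π * √3 / 2) ^ 2 = 4 / π ^ 2 := by
    rw [div_pow, mul_pow, sq_sqrt (by norm_num : (0 : ℝ) ≤ 3)]
    field_simp
    norm_num
  refine ⟨?_, hconst⟩
  rw [hconst, div_mul_eq_mul_div, div_mul_eq_mul_div, le_div_iff₀ (by positivity), mul_comm]
  exact pi_sq_mul_integral_pow_six_le hderiv h2 h2' h6
end

section
/- For every function u in H^1(ℝ⁺) (u defined on [0,∞) with u, u' ∈ L²), the inequality ‖u‖_{L^6(ℝ⁺)}^6 ≤ K_{ℝ⁺} ‖u‖_{L^2(ℝ⁺)}^4 ‖u'‖_{L^2(ℝ⁺)}^2 holds with K_{ℝ⁺} = 3/μ_{ℝ⁺}² = 16/π², where μ_{ℝ⁺} = π√3/4. -/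
open MeasureTheory Set Filter Topology Real

/-!
Let `S = max u²` on `[0, ∞)`, attained because `u² → 0` at infinity. With
`ψ t = ∫₀ᵗ √(S² - s²) ds`, the function `ψ ∘ u²` falls from the quarter-disc area `ψ S = πS²/4`
at a maximum point to `ψ 0 = 0` at infinity, so for every `λ > 0`
`πS²/4 ≤ ∫ |(ψ ∘ u²)'| = ∫ 2|u'| · |u|√(S² - u⁴) ≤ λ‖u'‖₂² + λ⁻¹ (S²‖u‖₂² - ‖u‖₆⁶)`.
Optimising in `λ` gives `π²S⁴/64 ≤ ‖u'‖₂² (S²‖u‖₂² - ‖u‖₆⁶)`, and maximising the resulting upper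
bound for `‖u‖₆⁶` over `S²` produces the constant `16/π²`.
-/

theorem two_mul_le_mul_sq_add_inv_mul_sq {a b l : ℝ} (hl : 0 < l) :
    2 * a * b ≤ l * a ^ 2 + l⁻¹ * b ^ 2 := by
  have hdiff : l * a ^ 2 + l⁻¹ * b ^ 2 - 2 * a * b = l⁻¹ * (l * a - b) ^ 2 := by
    field_simp; ring
  nlinarith [mul_nonneg (inv_nonneg.2 hl.le) (sq_nonneg (l * a - b))]

theorem sq_le_four_mul_mul_of_forall_le_mul_add_inv_mul {c J W : ℝ} (hc : 0 ≤ c) (hJ : 0 ≤ J)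
    (hW : 0 ≤ W) (h : ∀ l > 0, c ≤ l * J + l⁻¹ * W) : c ^ 2 ≤ 4 * J * W := by
  rcases hc.eq_or_lt with rfl | hc
  · rw [zero_pow two_ne_zero]; positivity
  rcases hJ.eq_or_lt with rfl | hJ
  · have key := h ((2 * W + c) / c) (by positivity)
    rw [mul_zero, zero_add, inv_div, div_mul_eq_mul_div, le_div_iff₀ (by positivity)] at key
    nlinarith
  · have key := h (c / (2 * J)) (by positivity)
    rw [inv_div, show c / (2 * J) * J + 2 * J / c * W = (c ^ 2 + 4 * J * W) / (2 * c) by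
      field_simp; ring, le_div_iff₀ (by positivity)] at key
    nlinarith

theorem le_sq_mul_div_sq_of_sq_le {k t A I J : ℝ} (hk : 0 < k) (hJ : 0 ≤ J) (hA : A ≤ t * I)
    (h : (k * t) ^ 2 ≤ 4 * J * (t * I - A)) : A ≤ I ^ 2 * J / k ^ 2 := by
  rw [le_div_iff₀ (by positivity)]
  rcases hJ.eq_or_lt with rfl | hJ
  · have hkt : k * t = 0 := pow_eq_zero_iff two_ne_zero |>.1 <|
      le_antisymm (by simpa using h) (sq_nonneg _)
    rw [(mul_eq_zero.1 hkt).resolve_left hk.ne', zero_mul] at hA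
    nlinarith
  · nlinarith [sq_nonneg (2 * J * I - k ^ 2 * t)]

theorem integral_sqrt_one_sub_sq_zero_one : ∫ s in (0:ℝ)..1, √(1 - s ^ 2) = π / 4 := by
  have hcont : Continuous fun s : ℝ => √(1 - s ^ 2) := by fun_prop
  have hsymm : ∫ s in (-1:ℝ)..0, √(1 - s ^ 2) = ∫ s in (0:ℝ)..1, √(1 - s ^ 2) := by
    have h := intervalIntegral.integral_comp_neg (a := (0:ℝ)) (b := 1) fun s => √(1 - s ^ 2)
    simpa only [neg_sq, neg_zero] using h.symm
  have := intervalIntegral.integral_add_adjacent_intervals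
    (hcont.intervalIntegrable (μ := volume) (-1) 0) (hcont.intervalIntegrable 0 1)
  rw [integral_sqrt_one_sub_sq, hsymm] at this
  linarith

theorem integral_sqrt_sq_sub_sq {r : ℝ} (hr : 0 ≤ r) :
    ∫ s in (0:ℝ)..r, √(r ^ 2 - s ^ 2) = π / 4 * r ^ 2 := by
  have hscale : ∀ s, √(r ^ 2 - (r * s) ^ 2) = r * √(1 - s ^ 2) := fun s => by
    rw [show r ^ 2 - (r * s) ^ 2 = r ^ 2 * (1 - s ^ 2) by ring, Real.sqrt_mul (sq_nonneg r),
      Real.sqrt_sq hr]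
  have := intervalIntegral.smul_integral_comp_mul_left (a := 0) (b := 1)
    (fun s => √(r ^ 2 - s ^ 2)) r
  simp only [hscale, intervalIntegral.integral_const_mul, integral_sqrt_one_sub_sq_zero_one,
    mul_zero, mul_one, smul_eq_mul] at this
  rw [← this]; ring

theorem abs_sqrt_sq_sub_sq_mul_two_mul_le {S v w l : ℝ} (hv : v ^ 2 ≤ S) (hl : 0 < l) :
    |√(S ^ 2 - (v ^ 2) ^ 2) * (2 * v * w)| ≤ l * w ^ 2 + l⁻¹ * (S ^ 2 * v ^ 2 - v ^ 6) := by
  have hr : √(S ^ 2 - (v ^ 2) ^ 2) ^ 2 = S ^ 2 - (v ^ 2) ^ 2 :=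
    Real.sq_sqrt (by nlinarith [sq_nonneg v])
  calc |√(S ^ 2 - (v ^ 2) ^ 2) * (2 * v * w)|
      = 2 * |w| * (|v| * √(S ^ 2 - (v ^ 2) ^ 2)) := by
        rw [abs_mul, abs_of_nonneg (Real.sqrt_nonneg _), abs_mul, abs_mul, abs_two]; ring
    _ ≤ l * |w| ^ 2 + l⁻¹ * (|v| * √(S ^ 2 - (v ^ 2) ^ 2)) ^ 2 :=
        two_mul_le_mul_sq_add_inv_mul_sq hl
    _ = l * w ^ 2 + l⁻¹ * (S ^ 2 * v ^ 2 - v ^ 6) := by rw [sq_abs, mul_pow, sq_abs, hr]; ring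

section HalfLine

variable {u u' : ℝ → ℝ} {a : ℝ}

theorem ContinuousOn.exists_isMaxOn_Ici_of_tendsto_zero {f : ℝ → ℝ} (hf : ContinuousOn f (Ici a))
    (hf0 : ∀ x ∈ Ici a, 0 ≤ f x) (hlim : Tendsto f atTop (𝓝 0)) :
    ∃ x₀ ∈ Ici a, IsMaxOn f (Ici a) x₀ := by
  by_cases hpos : ∃ x ∈ Ici a, 0 < f x
  · obtain ⟨x₁, hx₁, hfx₁⟩ := hpos
    refine hf.exists_isMaxOn' isClosed_Ici hx₁ ?_
    rw [eventually_inf_principal, cocompact_eq_atBot_atTop, eventually_sup]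
    constructor
    · filter_upwards [eventually_lt_atBot a] with x hxa hx using absurd hx (not_le.2 hxa)
    · filter_upwards [hlim.eventually (eventually_le_nhds hfx₁)] with x hx _ using hx
  · push Not at hpos
    exact ⟨a, self_mem_Ici, isMaxOn_iff.2 fun x hx => (hpos x hx).trans (hf0 a self_mem_Ici)⟩

theorem aestronglyMeasurable_deriv_of_hasDerivAt_Ioi
    (hu : ∀ x ∈ Ioi a, HasDerivAt u (u' x) x) :
    AEStronglyMeasurable u' (volume.restrict (Ioi a)) := by
  refine (measurable_deriv u).aestronglyMeasurable.congr ?_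
  filter_upwards [ae_restrict_mem measurableSet_Ioi] with x hx using (hu x hx).deriv

theorem aestronglyMeasurable_of_hasDerivAt_Ioi
    (hu : ∀ x ∈ Ioi a, HasDerivAt u (u' x) x) :
    AEStronglyMeasurable u (volume.restrict (Ioi a)) :=
  ContinuousOn.aestronglyMeasurable (fun x hx => (hu x hx).continuousAt.continuousWithinAt)
    measurableSet_Ioi

theorem integrableOn_mul_of_hasDerivAt_Ioi (hu : ∀ x ∈ Ioi a, HasDerivAt u (u' x) x)
    (h2 : IntegrableOn (fun x => u x ^ 2) (Ioi a))
    (h2' : IntegrableOn (fun x => u' x ^ 2) (Ioi a)) :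
    IntegrableOn (fun x => u x * u' x) (Ioi a) := by
  have hu2 := (memLp_two_iff_integrable_sq (aestronglyMeasurable_of_hasDerivAt_Ioi hu)).2 h2
  have hu'2 :=
    (memLp_two_iff_integrable_sq (aestronglyMeasurable_deriv_of_hasDerivAt_Ioi hu)).2 h2'
  exact hu2.integrable_mul hu'2

theorem tendsto_sq_atTop_of_hasDerivAt_Ioi (hu : ∀ x ∈ Ioi a, HasDerivAt u (u' x) x)
    (h2 : IntegrableOn (fun x => u x ^ 2) (Ioi a))
    (h2' : IntegrableOn (fun x => u' x ^ 2) (Ioi a)) :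
    Tendsto (fun x => u x ^ 2) atTop (𝓝 0) := by
  refine tendsto_zero_of_hasDerivAt_of_integrableOn_Ioi (f' := fun x => 2 * (u x * u' x))
    (fun x hx => ?_) ((integrableOn_mul_of_hasDerivAt_Ioi hu h2 h2').const_mul 2) h2
  simpa [mul_assoc] using (hu x hx).fun_pow 2

theorem integrableOn_sqrt_sq_sub_sq_mul (S : ℝ) (hu : ∀ x ∈ Ioi a, HasDerivAt u (u' x) x)
    (h2 : IntegrableOn (fun x => u x ^ 2) (Ioi a))
    (h2' : IntegrableOn (fun x => u' x ^ 2) (Ioi a)) :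
    IntegrableOn (fun x => √(S ^ 2 - (u x ^ 2) ^ 2) * (2 * u x * u' x)) (Ioi a) := by
  have hum := aestronglyMeasurable_of_hasDerivAt_Ioi hu
  have hu'm := aestronglyMeasurable_deriv_of_hasDerivAt_Ioi hu
  refine ((integrableOn_mul_of_hasDerivAt_Ioi hu h2 h2').norm.const_mul (2 * |S|)).mono'
    (by fun_prop) (ae_of_all _ fun x => ?_)
  have hsqrt : √(S ^ 2 - (u x ^ 2) ^ 2) ≤ |S| :=
    (Real.sqrt_le_left (abs_nonneg S)).2 (by rw [sq_abs]; nlinarith [sq_nonneg (u x ^ 2)])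
  rw [Real.norm_eq_abs, Real.norm_eq_abs, abs_mul, abs_of_nonneg (Real.sqrt_nonneg _), mul_assoc 2,
    abs_mul, abs_two]
  exact (mul_le_mul_of_nonneg_right hsqrt (by positivity)).trans_eq (by ring)

theorem integral_pow_six_le_sq_mul_integral_sq {S : ℝ} (hS : ∀ x ∈ Ioi a, u x ^ 2 ≤ S)
    (h2 : IntegrableOn (fun x => u x ^ 2) (Ioi a)) (h6 : IntegrableOn (fun x => u x ^ 6) (Ioi a)) :
    ∫ x in Ioi a, u x ^ 6 ≤ S ^ 2 * ∫ x in Ioi a, u x ^ 2 := by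
  rw [← integral_const_mul]
  refine setIntegral_mono_on h6 (h2.const_mul _) measurableSet_Ioi fun x hx => ?_
  have : (u x ^ 2) ^ 2 ≤ S ^ 2 := pow_le_pow_left₀ (sq_nonneg _) (hS x hx) 2
  calc u x ^ 6 = (u x ^ 2) ^ 2 * u x ^ 2 := by ring
    _ ≤ S ^ 2 * u x ^ 2 := by gcongr

theorem integral_abs_sqrt_sq_sub_sq_mul_le {S l : ℝ} (hl : 0 < l) (hS : ∀ x ∈ Ioi a, u x ^ 2 ≤ S)
    (h2 : IntegrableOn (fun x => u x ^ 2) (Ioi a)) (h2' : IntegrableOn (fun x => u' x ^ 2) (Ioi a))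
    (h6 : IntegrableOn (fun x => u x ^ 6) (Ioi a)) :
    ∫ x in Ioi a, |√(S ^ 2 - (u x ^ 2) ^ 2) * (2 * u x * u' x)| ≤
      l * (∫ x in Ioi a, u' x ^ 2) +
        l⁻¹ * (S ^ 2 * (∫ x in Ioi a, u x ^ 2) - ∫ x in Ioi a, u x ^ 6) := by
  have hW : IntegrableOn (fun x => S ^ 2 * u x ^ 2 - u x ^ 6) (Ioi a) := (h2.const_mul _).sub h6
  calc _ ≤ ∫ x in Ioi a, (l * u' x ^ 2 + l⁻¹ * (S ^ 2 * u x ^ 2 - u x ^ 6)) :=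
        integral_mono_of_nonneg (ae_of_all _ fun _ => abs_nonneg _)
          ((h2'.const_mul l).add (hW.const_mul _))
          ((ae_restrict_iff' measurableSet_Ioi).2 <| ae_of_all _ fun x hx =>
            abs_sqrt_sq_sub_sq_mul_two_mul_le (hS x hx) hl)
    _ = _ := by
        rw [integral_add (h2'.const_mul l) (hW.const_mul _), integral_const_mul, integral_const_mul,
          integral_sub (h2.const_mul _) h6, integral_const_mul]

theorem pi_div_four_mul_sq_le_integral_abs {S x₀ : ℝ}
    (hderiv : ∀ x ∈ Ici a, HasDerivWithinAt u (u' x) (Ici a) x)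
    (hlim : Tendsto (fun x => u x ^ 2) atTop (𝓝 0)) (hx₀ : a ≤ x₀) (hS : u x₀ ^ 2 = S)
    (hint : IntegrableOn (fun x => √(S ^ 2 - (u x ^ 2) ^ 2) * (2 * u x * u' x)) (Ioi a)) :
    π / 4 * S ^ 2 ≤ ∫ x in Ioi a, |√(S ^ 2 - (u x ^ 2) ^ 2) * (2 * u x * u' x)| := by
  set ψ : ℝ → ℝ := fun t => ∫ s in (0:ℝ)..t, √(S ^ 2 - s ^ 2)
  have hcont : Continuous fun s : ℝ => √(S ^ 2 - s ^ 2) := by fun_prop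
  have hψ : ∀ t, HasDerivAt ψ (√(S ^ 2 - t ^ 2)) t := fun t =>
    (hcont.integral_hasStrictDerivAt 0 t).hasDerivAt
  have hH : ∀ x ∈ Ici a, HasDerivWithinAt (fun x => ψ (u x ^ 2))
      (√(S ^ 2 - (u x ^ 2) ^ 2) * (2 * u x * u' x)) (Ici a) x := fun x hx =>
    (hψ _).comp_hasDerivWithinAt x (by simpa using (hderiv x hx).fun_pow 2)
  have hFTC := integral_Ioi_of_hasDerivAt_of_tendsto
    ((hH x₀ hx₀).continuousWithinAt.mono (Ici_subset_Ici.2 hx₀))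
    (fun x hx => (hH x (hx₀.trans hx.le)).hasDerivAt (Ici_mem_nhds (hx₀.trans_lt hx)))
    (hint.mono_set (Ioi_subset_Ioi hx₀)) ((hψ 0).continuousAt.tendsto.comp hlim)
  have hψ0 : ψ 0 = 0 := intervalIntegral.integral_same
  have hψS : ψ S = π / 4 * S ^ 2 := integral_sqrt_sq_sub_sq (hS ▸ sq_nonneg _)
  rw [hS, hψ0, hψS] at hFTC
  calc π / 4 * S ^ 2 = -∫ x in Ioi x₀, √(S ^ 2 - (u x ^ 2) ^ 2) * (2 * u x * u' x) := by linarith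
    _ ≤ ∫ x in Ioi x₀, |√(S ^ 2 - (u x ^ 2) ^ 2) * (2 * u x * u' x)| :=
        (neg_le_abs _).trans abs_integral_le_integral_abs
    _ ≤ ∫ x in Ioi a, |√(S ^ 2 - (u x ^ 2) ^ 2) * (2 * u x * u' x)| :=
        setIntegral_mono_set hint.abs (ae_of_all _ fun _ => abs_nonneg _)
          (Ioi_subset_Ioi hx₀).eventuallyLE

end HalfLine

/-- Gagliardo–Nirenberg inequality on the half-line `ℝ⁺` with sharp constant
`K_{ℝ⁺} = 3/μ_{ℝ⁺}² = 16/π²`, where `μ_{ℝ⁺} = π√3/4`. -/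
theorem stmt_8 (u u' : ℝ → ℝ)
    (hderiv : ∀ x ∈ Set.Ici (0:ℝ), HasDerivWithinAt u (u' x) (Set.Ici 0) x)
    (h2 : IntegrableOn (fun x => (u x) ^ 2) (Set.Ioi 0))
    (h2' : IntegrableOn (fun x => (u' x) ^ 2) (Set.Ioi 0))
    (h6 : IntegrableOn (fun x => (u x) ^ 6) (Set.Ioi 0)) :
    (∫ x in Set.Ioi (0:ℝ), (u x) ^ 6) ≤ 3 / (Real.pi * Real.sqrt 3 / 4) ^ 2 *
      (∫ x in Set.Ioi (0:ℝ), (u x) ^ 2) ^ 2 * (∫ x in Set.Ioi (0:ℝ), (u' x) ^ 2) ∧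
    3 / (Real.pi * Real.sqrt 3 / 4) ^ 2 = 16 / Real.pi ^ 2 := by
  have hconst : 3 / (π * √3 / 4) ^ 2 = 16 / π ^ 2 := by
    rw [div_pow, mul_pow, Real.sq_sqrt zero_le_three]
    field_simp
    ring
  refine ⟨?_, hconst⟩
  have hu : ∀ x ∈ Ioi (0:ℝ), HasDerivAt u (u' x) x := fun x hx =>
    (hderiv x (Ioi_subset_Ici_self hx)).hasDerivAt (Ici_mem_nhds hx)
  have hlim := tendsto_sq_atTop_of_hasDerivAt_Ioi hu h2 h2'
  obtain ⟨x₀, hx₀, hmax⟩ := ContinuousOn.exists_isMaxOn_Ici_of_tendsto_zero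
    (fun x hx => ((hderiv x hx).fun_pow 2).continuousWithinAt) (fun x _ => sq_nonneg (u x)) hlim
  set S := u x₀ ^ 2 with hS
  have hbound : ∀ x ∈ Ioi (0:ℝ), u x ^ 2 ≤ S := fun x hx =>
    isMaxOn_iff.1 hmax x (Ioi_subset_Ici_self hx)
  have hA := integral_pow_six_le_sq_mul_integral_sq hbound h2 h6
  have hkey : ∀ l > 0, π / 4 * S ^ 2 ≤ l * (∫ x in Ioi 0, u' x ^ 2) +
      l⁻¹ * (S ^ 2 * (∫ x in Ioi 0, u x ^ 2) - ∫ x in Ioi 0, u x ^ 6) := fun l hl =>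
    (pi_div_four_mul_sq_le_integral_abs hderiv hlim hx₀ hS.symm
      (integrableOn_sqrt_sq_sub_sq_mul S hu h2 h2')).trans
      (integral_abs_sqrt_sq_sub_sq_mul_le hl hbound h2 h2' h6)
  have hJ : 0 ≤ ∫ x in Ioi (0:ℝ), u' x ^ 2 :=
    setIntegral_nonneg measurableSet_Ioi fun x _ => sq_nonneg _
  have hsq := sq_le_four_mul_mul_of_forall_le_mul_add_inv_mul (by positivity) hJ
    (sub_nonneg.2 hA) hkey
  refine (le_sq_mul_div_sq_of_sq_le (by positivity) hJ hA hsq).trans_eq ?_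
  rw [hconst]
  field_simp
  ring
end

section
/- Let ℓ > 0 and let ψ : [0,ℓ] → ℝ be continuous, nonnegative and nonincreasing with ψ ∈ L². Then there exists x₀ ∈ [ℓ/2, ℓ) such that ψ(x₀)⁴ ≤ (64 m^{1/2}/ℓ²) (∫_{x₀}^{ℓ} ψ² dx)^{3/2}, where m := ∫_{ℓ/2}^{ℓ} ψ² dx. -/
/-!
Suppose the inequality fails at every `x ∈ [ℓ/2, ℓ)` and put `F x = ∫_x^ℓ ψ²`, so that
`m = F (ℓ/2)`, `F ℓ = 0` and `F' = -ψ²`. Taking square roots of the failed inequality gives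
`-F' > 8 m^{1/4} F^{3/4} / ℓ`, i.e. `-(F^{1/4})' > 2 m^{1/4} / ℓ`. Integrating over `[ℓ/2, ℓ]`
yields `m^{1/4} = F (ℓ/2)^{1/4} > m^{1/4}`.
-/

open MeasureTheory Set

theorem strictAntiOn_rpow_add_mul_of_hasDerivAt {F F' : ℝ → ℝ} {a b p c : ℝ} (hp : 0 ≤ p)
    (hF : ContinuousOn F (Icc a b)) (hF' : ∀ x ∈ Ioo a b, HasDerivAt F (F' x) x)
    (hpos : ∀ x ∈ Ioo a b, 0 < F x) (hlt : ∀ x ∈ Ioo a b, c * F x ^ (1 - p) < p * -F' x) :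
    StrictAntiOn (fun x => F x ^ p + c * x) (Icc a b) := by
  refine strictAntiOn_of_deriv_neg (convex_Icc a b)
    ((hF.rpow_const fun _ _ => Or.inr hp).add (continuousOn_const.mul continuousOn_id)) ?_
  rw [interior_Icc]
  intro x hx
  have hFx := hpos x hx
  have hderiv : HasDerivAt (fun y => F y ^ p + c * y) (F' x * p * F x ^ (p - 1) + c * 1) x :=
    ((hF' x hx).rpow_const (Or.inl hFx.ne')).add ((hasDerivAt_id' x).const_mul c)
  rw [hderiv.deriv]
  have hinv : F x ^ (1 - p) * F x ^ (p - 1) = 1 := by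
    rw [← Real.rpow_add hFx]; norm_num
  have hscaled := mul_lt_mul_of_pos_right (hlt x hx) (Real.rpow_pos_of_pos hFx (p - 1))
  rw [mul_assoc, hinv] at hscaled
  linarith

theorem hasDerivAt_integral_left_of_continuousOn {f : ℝ → ℝ} {a b x : ℝ}
    (hf : ContinuousOn f (Icc a b)) (hx : x ∈ Ioo a b) :
    HasDerivAt (fun y => ∫ t in y..b, f t) (-f x) x :=
  intervalIntegral.integral_hasDerivAt_left
    ((hf.mono (uIcc_subset_Icc (Ioo_subset_Icc_self hx) (right_mem_Icc.2 (hx.1.trans hx.2).le))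
      ).intervalIntegrable)
    ((hf.mono Ioo_subset_Icc_self).stronglyMeasurableAtFilter isOpen_Ioo x hx)
    (hf.continuousAt (Icc_mem_nhds hx.1 hx.2))

theorem continuousOn_integral_left_of_continuousOn {f : ℝ → ℝ} {a b : ℝ} (hab : a ≤ b)
    (hf : ContinuousOn f (Icc a b)) :
    ContinuousOn (fun y => ∫ t in y..b, f t) (Icc a b) := by
  have h := intervalIntegral.continuousOn_primitive_interval_left (μ := volume)
    (by rw [uIcc_of_le hab]; exact hf.integrableOn_compact isCompact_Icc)
  rwa [uIcc_of_le hab] at h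

theorem mul_sub_lt_rpow_integral_of_mul_rpow_lt {f : ℝ → ℝ} {a b p c : ℝ} (hab : a < b)
    (hp : 0 < p) (hc : 0 ≤ c) (hf : ContinuousOn f (Icc a b)) (hf0 : ∀ x ∈ Icc a b, 0 ≤ f x)
    (hlt : ∀ x ∈ Ioo a b, c * (∫ t in x..b, f t) ^ (1 - p) < p * f x) :
    c * (b - a) < (∫ t in a..b, f t) ^ p := by
  have hF_nonneg : ∀ x ∈ Icc a b, 0 ≤ ∫ t in x..b, f t := fun x hx =>
    intervalIntegral.integral_nonneg hx.2 fun t ht => hf0 t ⟨hx.1.trans ht.1, ht.2⟩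
  have hf_pos : ∀ x ∈ Ioo a b, 0 < f x := fun x hx =>
    pos_of_mul_pos_right ((mul_nonneg hc (Real.rpow_nonneg
      (hF_nonneg x (Ioo_subset_Icc_self hx)) _)).trans_lt (hlt x hx)) hp.le
  have hF_pos : ∀ x ∈ Ioo a b, 0 < ∫ t in x..b, f t := fun x hx =>
    intervalIntegral.intervalIntegral_pos_of_pos_on
      ((hf.mono (Icc_subset_Icc hx.1.le le_rfl)).intervalIntegrable_of_Icc hx.2.le)
      (fun t ht => hf_pos t ⟨hx.1.trans ht.1, ht.2⟩) hx.2
  have hanti := strictAntiOn_rpow_add_mul_of_hasDerivAt hp.le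
    (continuousOn_integral_left_of_continuousOn hab.le hf)
    (fun x hx => hasDerivAt_integral_left_of_continuousOn hf hx) hF_pos
    (fun x hx => by simpa only [neg_neg] using hlt x hx)
    (left_mem_Icc.2 hab.le) (right_mem_Icc.2 hab.le) hab
  simp only [intervalIntegral.integral_same, Real.zero_rpow hp.ne'] at hanti
  linarith

theorem stmt_10_general (ℓ : ℝ) (hℓ : 0 < ℓ) (ψ : ℝ → ℝ)
    (hc : ContinuousOn ψ (Set.Icc 0 ℓ)) :
    ∃ x₀ ∈ Set.Ico (ℓ/2) ℓ,
      (ψ x₀) ^ 4 ≤ 64 * Real.sqrt (∫ x in (ℓ/2)..ℓ, (ψ x) ^ 2) / ℓ ^ 2 *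
        (∫ x in x₀..ℓ, (ψ x) ^ 2) ^ ((3:ℝ)/2) := by
  by_contra! hfail
  set F : ℝ → ℝ := fun x => ∫ t in x..ℓ, ψ t ^ 2
  set m := F (ℓ/2)
  have hF_nonneg : ∀ x ≤ ℓ, 0 ≤ F x := fun x hx =>
    intervalIntegral.integral_nonneg hx fun _ _ => sq_nonneg _
  have hm : 0 ≤ m := hF_nonneg _ (by linarith)
  set c := 2 * m ^ (1/4 : ℝ) / ℓ with hc_def
  have hψ_gt : ∀ x ∈ Ioo (ℓ/2) ℓ, c * F x ^ (1 - 1/4 : ℝ) < 1/4 * ψ x ^ 2 := by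
    intro x hx
    have hm2 : (m ^ (1/4 : ℝ)) ^ 2 = √m := by
      rw [Real.sqrt_eq_rpow, ← Real.rpow_natCast, ← Real.rpow_mul hm]; norm_num
    have hF2 : (F x ^ (1 - 1/4 : ℝ)) ^ 2 = F x ^ ((3:ℝ)/2) := by
      rw [← Real.rpow_natCast, ← Real.rpow_mul (hF_nonneg x hx.2.le)]; norm_num
    have hsq : (4 * c * F x ^ (1 - 1/4 : ℝ)) ^ 2 = 64 * √m / ℓ ^ 2 * F x ^ ((3:ℝ)/2) := by
      rw [← hm2, ← hF2, hc_def]; ring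
    have hsqrt : 4 * c * F x ^ (1 - 1/4 : ℝ) < ψ x ^ 2 := by
      refine lt_of_pow_lt_pow_left₀ 2 (sq_nonneg _) ?_
      rw [hsq, ← pow_mul]
      exact hfail x (Ioo_subset_Ico_self hx)
    linarith
  have hlower := mul_sub_lt_rpow_integral_of_mul_rpow_lt (by linarith) (by norm_num)
    (by positivity) ((hc.pow 2).mono (Icc_subset_Icc (by linarith) le_rfl))
    (fun _ _ => sq_nonneg _) hψ_gt
  have hcℓ : c * (ℓ - ℓ/2) = m ^ (1/4 : ℝ) := by rw [hc_def]; field_simp; ring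
  exact (hcℓ ▸ hlower).false

/-- Selection lemma: for a continuous, nonnegative, nonincreasing `ψ` on `[0,ℓ]`
there exists `x₀ ∈ [ℓ/2, ℓ)` with
`ψ(x₀)⁴ ≤ (64 √m/ℓ²)(∫_{x₀}^ℓ ψ²)^{3/2}`, where `m = ∫_{ℓ/2}^ℓ ψ²`. -/
theorem stmt_10 (ℓ : ℝ) (hℓ : 0 < ℓ) (ψ : ℝ → ℝ)
    (hc : ContinuousOn ψ (Set.Icc 0 ℓ))
    (hpos : ∀ x ∈ Set.Icc 0 ℓ, 0 ≤ ψ x)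
    (hmono : AntitoneOn ψ (Set.Icc 0 ℓ)) :
    ∃ x₀ ∈ Set.Ico (ℓ/2) ℓ,
      (ψ x₀) ^ 4 ≤ 64 * Real.sqrt (∫ x in (ℓ/2)..ℓ, (ψ x) ^ 2) / ℓ ^ 2 *
        (∫ x in x₀..ℓ, (ψ x) ^ 2) ^ ((3:ℝ)/2) :=
  stmt_10_general ℓ hℓ ψ hc
end
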